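/- Let k be a field, A and B unital associative k-algebras, and ξ : A ⊗ B → B ⊗ A a linear map with ξ(1_A ⊗ b) = b ⊗ 1_A and ξ(a ⊗ 1_B) = 1_B ⊗ a. Let σ_Ass(A) : A ⊗ A → A ⊗ A be a ⊗ a' ↦ 1_A ⊗ aa' and σ_Ass(B) : B ⊗ B → B ⊗ B be b ⊗ b' ↦ 1_B ⊗ bb'. Then: (i) the colored Yang–Baxter equation (ξ ⊗ id_A)∘(id_A ⊗ ξ)∘(σ_Ass(A) ⊗ id_B) = (id_B ⊗ σ_Ass(A))∘(ξ ⊗ id_A)∘(id_A ⊗ ξ) on A ⊗ A ⊗ B holds if and only if ξ∘(μ_A ⊗ id_B) = (id_B ⊗ μ_A)∘(ξ ⊗ id_A)∘(id_A ⊗ ξ); and (ii) the colored Yang–Baxter equation (σ_Ass(B) ⊗ id_A)∘(id_B ⊗ ξ)∘(ξ ⊗ id_B) = (id_B ⊗ ξ)∘(ξ ⊗ id_B)∘(id_A ⊗ σ_Ass(B)) on A ⊗ B ⊗ B holds if and only if ξ∘(id_A ⊗ μ_B) = (μ_B ⊗ id_A)∘(id_B ⊗ ξ)∘(ξ ⊗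 id_B). -/

import Mathlib

/-!
The associativity braiding factors as `σ_Ass = ι ∘ μ` through the unit insertion `ι : x ↦ 1 ⊗ x`.
Pushing `ι` through the two copies of `ξ` with `ξ (1 ⊗ b) = b ⊗ 1` (resp. `ξ (a ⊗ 1) = 1 ⊗ a`)
shows that both sides of each Yang–Baxter equation are the corresponding sides of the
naturality equation followed by a tensored unit insertion. Multiplication is a left inverse of
`ι`, so that insertion is injective and can be cancelled.
-/

open TensorProduct

variable (k : Type*) [Field k]

/-- The colored Yang–Baxter equation on `X ⊗ Y ⊗ Z`. -/
def ColoredYBE (X Y Z : Type*) [AddCommGroup X] [Module k X] [AddCommGroup Y] [Module k Y]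
    [AddCommGroup Z] [Module k Z]
    (cXY : X ⊗[k] Y →ₗ[k] Y ⊗[k] X) (cXZ : X ⊗[k] Z →ₗ[k] Z ⊗[k] X)
    (cYZ : Y ⊗[k] Z →ₗ[k] Z ⊗[k] Y) : Prop :=
  (TensorProduct.assoc k Z Y X).toLinearMap
      ∘ₗ (cYZ.rTensor X)
      ∘ₗ (TensorProduct.assoc k Y Z X).symm.toLinearMap
      ∘ₗ (cXZ.lTensor Y)
      ∘ₗ (TensorProduct.assoc k Y X Z).toLinearMap
      ∘ₗ (cXY.rTensor Z)
      ∘ₗ (TensorProduct.assoc k X Y Z).symm.toLinearMap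
    = (cXY.lTensor Z)
      ∘ₗ (TensorProduct.assoc k Z X Y).toLinearMap
      ∘ₗ (cXZ.rTensor Y)
      ∘ₗ (TensorProduct.assoc k X Z Y).symm.toLinearMap
      ∘ₗ (cYZ.lTensor X)

/-- Naturality of `ξ : P ⊗ Q → Q ⊗ P` with respect to a multiplication `μP` on `P`. -/
def NatFirst {P Q : Type*} [AddCommGroup P] [Module k P] [AddCommGroup Q] [Module k Q]
    (μP : P ⊗[k] P →ₗ[k] P) (ξ : P ⊗[k] Q →ₗ[k] Q ⊗[k] P) : Prop :=
  ξ ∘ₗ (μP.rTensor Q) ∘ₗ (TensorProduct.assoc k P P Q).symm.toLinearMap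
    = (μP.lTensor Q)
      ∘ₗ (TensorProduct.assoc k Q P P).toLinearMap
      ∘ₗ (ξ.rTensor P)
      ∘ₗ (TensorProduct.assoc k P Q P).symm.toLinearMap
      ∘ₗ (ξ.lTensor P)

/-- Naturality of `ξ : P ⊗ Q → Q ⊗ P` with respect to a multiplication `μQ` on `Q`. -/
def NatSecond {P Q : Type*} [AddCommGroup P] [Module k P] [AddCommGroup Q] [Module k Q]
    (μQ : Q ⊗[k] Q →ₗ[k] Q) (ξ : P ⊗[k] Q →ₗ[k] Q ⊗[k] P) : Prop :=
  ξ ∘ₗ (μQ.lTensor P)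
    = (μQ.rTensor P)
      ∘ₗ (TensorProduct.assoc k Q Q P).symm.toLinearMap
      ∘ₗ (ξ.lTensor Q)
      ∘ₗ (TensorProduct.assoc k Q P Q).toLinearMap
      ∘ₗ (ξ.rTensor Q)
      ∘ₗ (TensorProduct.assoc k P Q Q).symm.toLinearMap

namespace TensorProduct

variable {R A M : Type*} [CommSemiring R] [Semiring A] [Algebra R A] [AddCommMonoid M]
  [Module R M]

theorem mul'_comp_mk_one : LinearMap.mul' R A ∘ₗ mk R A A 1 = LinearMap.id := by
  ext; simp

theorem lTensor_mk_one_injective : Function.Injective ((mk R A A 1).lTensor M) :=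
  Function.LeftInverse.injective (g := (LinearMap.mul' R A).lTensor M) fun x => by
    rw [← LinearMap.comp_apply, ← LinearMap.lTensor_comp, mul'_comp_mk_one, LinearMap.lTensor_id,
      LinearMap.id_apply]

theorem rTensor_mk_one_injective : Function.Injective ((mk R A A 1).rTensor M) :=
  Function.LeftInverse.injective (g := (LinearMap.mul' R A).rTensor M) fun x => by
    rw [← LinearMap.comp_apply, ← LinearMap.rTensor_comp, mul'_comp_mk_one, LinearMap.rTensor_id,
      LinearMap.id_apply]

theorem assoc_comp_rTensor_mk_one :
    (TensorProduct.assoc R A A M).toLinearMap ∘ₗ (mk R A A 1).rTensor M = mk R A (A ⊗[R] M) 1 := by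
  ext; simp

theorem mk_one_injective : Function.Injective (mk R A (A ⊗[R] M) 1) := by
  rw [← assoc_comp_rTensor_mk_one]
  exact (TensorProduct.assoc R A A M).injective.comp rTensor_mk_one_injective

theorem assoc_comp_rTensor_comp_mk_one (ξ : A ⊗[R] M →ₗ[R] M ⊗[R] A)
    (hξ : ∀ m, ξ (1 ⊗ₜ m) = m ⊗ₜ 1) :
    (TensorProduct.assoc R M A A).toLinearMap ∘ₗ ξ.rTensor A
        ∘ₗ (TensorProduct.assoc R A M A).symm.toLinearMap ∘ₗ mk R A (M ⊗[R] A) 1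
      = (mk R A A 1).lTensor M := by
  ext; simp [hξ]

end TensorProduct

/-- The mixed colored Yang–Baxter equations on `A ⊗ A ⊗ B` and on `A ⊗ B ⊗ B`, where on the
diagonal components one puts the associativity braidings `σ_Ass(A) : a ⊗ a' ↦ 1 ⊗ aa'` and
`σ_Ass(B) : b ⊗ b' ↦ 1 ⊗ bb'`, are respectively equivalent to the naturality of `ξ` with
respect to `μ_A` and to `μ_B`. -/
theorem mixed_ybe_iff_naturality
    (A B : Type*) [Ring A] [Algebra k A] [Ring B] [Algebra k B]
    (ξ : A ⊗[k] B →ₗ[k] B ⊗[k] A)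
    (hξB : ∀ b : B, ξ ((1 : A) ⊗ₜ[k] b) = b ⊗ₜ[k] (1 : A))
    (hξA : ∀ a : A, ξ (a ⊗ₜ[k] (1 : B)) = (1 : B) ⊗ₜ[k] a) :
    (ColoredYBE k A A B
        ((TensorProduct.mk k A A 1) ∘ₗ (LinearMap.mul' k A)) ξ ξ
      ↔ NatFirst k (LinearMap.mul' k A) ξ)
    ∧ (ColoredYBE k A B B
        ξ ξ ((TensorProduct.mk k B B 1) ∘ₗ (LinearMap.mul' k B))
      ↔ NatSecond k (LinearMap.mul' k B) ξ) := by
  constructor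
  · refine (Eq.congr ?_ ?_).trans (LinearMap.cancel_left (lTensor_mk_one_injective (M := B)))
    · ext a a' b
      simpa using congr($(assoc_comp_rTensor_comp_mk_one ξ hξB) (ξ ((a * a') ⊗ₜ b)))
    · simp only [LinearMap.lTensor_comp, LinearMap.comp_assoc]
  · refine (Eq.congr ?_ ?_).trans
      ((LinearMap.cancel_left (mk_one_injective (M := A))).trans eq_comm)
    · simp only [LinearMap.rTensor_comp, ← assoc_comp_rTensor_mk_one, LinearMap.comp_assoc]
    · ext a b b'
      simp [hξA]
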